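/- For n ≥ 0, the identity qbinom(2n,n) − q^2·qbinom(2n,n−2) = [2]_q/[n+2]_q · qbinom(2n+1,n) holds. -/
import Mathlib


open Finset

/-- The q-analog `[m]_q = 1 + q + ⋯ + q^(m-1)`. -/
noncomputable def qint (q : RatFunc ℚ) (m : ℕ) : RatFunc ℚ := ∑ i ∈ Finset.range m, q ^ i

/-- The q-factorial `[m]_q!`. -/
noncomputable def qfact (q : RatFunc ℚ) (m : ℕ) : RatFunc ℚ := ∏ i ∈ Finset.range m, qint q (i + 1)

/-- The q-binomial coefficient, vanishing outside `0 ≤ k ≤ n`. -/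
noncomputable def qbinom (q : RatFunc ℚ) (n k : ℕ) : RatFunc ℚ :=
  if k ≤ n then qfact q n / (qfact q k * qfact q (n - k)) else 0

/-- The q-binomial coefficient with an integer lower index, vanishing when `k < 0` or `k > n`. -/
noncomputable def qbinomZ (q : RatFunc ℚ) (n : ℕ) (k : ℤ) : RatFunc ℚ :=
  if 0 ≤ k ∧ k ≤ (n : ℤ) then qfact q n / (qfact q k.toNat * qfact q (n - k.toNat)) else 0

lemma qint_mul (m : ℕ) : (RatFunc.X - 1) * qint RatFunc.X m = RatFunc.X ^ m - 1 := by
  rw [qint, mul_comm, geom_sum_mul]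

lemma X_pow_ne_one (m : ℕ) (hm : 1 ≤ m) : (RatFunc.X : RatFunc ℚ) ^ m ≠ 1 := by
  intro h
  have : (Polynomial.X : Polynomial ℚ) ^ m = 1 := by
    apply RatFunc.algebraMap_injective ℚ
    simpa [map_pow] using h
  have := congrArg Polynomial.natDegree this
  simp [Polynomial.natDegree_X_pow] at this
  omega

lemma X_sub_one_ne_zero : (RatFunc.X - 1 : RatFunc ℚ) ≠ 0 := by
  intro h
  exact X_pow_ne_one 1 le_rfl (by simpa using sub_eq_zero.mp h)

lemma qint_ne_zero (m : ℕ) (hm : 1 ≤ m) : qint RatFunc.X m ≠ 0 := by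
  intro h
  have h2 := qint_mul m
  rw [h, mul_zero] at h2
  exact X_pow_ne_one m hm (sub_eq_zero.mp h2.symm)

lemma qfact_succ (q : RatFunc ℚ) (m : ℕ) : qfact q (m + 1) = qfact q m * qint q (m + 1) :=
  Finset.prod_range_succ _ _

lemma qfact_zero (q : RatFunc ℚ) : qfact q 0 = 1 := Finset.prod_range_zero _

lemma qfact_ne_zero (m : ℕ) : qfact RatFunc.X m ≠ 0 := by
  induction m with
  | zero => simp [qfact_zero]
  | succ k ih => rw [qfact_succ]; exact mul_ne_zero ih (qint_ne_zero _ (by omega))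

lemma key (m : ℕ) :
    qint RatFunc.X (m + 3) * qint RatFunc.X (m + 4)
      - RatFunc.X ^ 2 * qint RatFunc.X (m + 1) * qint RatFunc.X (m + 2)
    = qint RatFunc.X 2 * qint RatFunc.X (2 * m + 5) := by
  have e : ∀ a b : ℕ, qint RatFunc.X a * qint RatFunc.X b * (RatFunc.X - 1) ^ 2
      = (RatFunc.X ^ a - 1) * (RatFunc.X ^ b - 1) := by
    intro a b
    rw [← qint_mul a, ← qint_mul b]; ring
  apply mul_left_cancel₀ (pow_ne_zero 2 X_sub_one_ne_zero)
  linear_combination e (m + 3) (m + 4) - RatFunc.X ^ 2 * e (m + 1) (m + 2) - e 2 (2 * m + 5)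

/-- For `n ≥ 0`, `qbinom(2n,n) - q²·qbinom(2n,n-2) = [2]_q/[n+2]_q · qbinom(2n+1,n)`. -/
theorem qbinom_sub_identity (n : ℕ) :
    qbinom RatFunc.X (2 * n) n - RatFunc.X ^ 2 * qbinomZ RatFunc.X (2 * n) ((n : ℤ) - 2)
    = qint RatFunc.X 2 / qint RatFunc.X (n + 2) * qbinom RatFunc.X (2 * n + 1) n := by
  match n with
  | 0 =>
    simp only [qbinom, qbinomZ]
    norm_num
    rw [qfact_zero, qfact_succ, qfact_zero, show qint RatFunc.X 1 = 1 by simp [qint]]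
    field_simp [qint_ne_zero 2 (by omega)]
  | 1 =>
    simp only [qbinom, qbinomZ]
    norm_num
    rw [show qfact RatFunc.X 3 = qfact RatFunc.X 2 * qint RatFunc.X 3 from qfact_succ _ 2,
      show qfact RatFunc.X 2 = qfact RatFunc.X 1 * qint RatFunc.X 2 from qfact_succ _ 1,
      show qfact RatFunc.X 1 = qfact RatFunc.X 0 * qint RatFunc.X 1 from qfact_succ _ 0,
      qfact_zero, show qint RatFunc.X 1 = 1 by simp [qint]]
    field_simp [qint_ne_zero 2 (by omega), qint_ne_zero 3 (by omega)]
  | (m + 2) =>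
    have h1 : qbinom RatFunc.X (2 * (m + 2)) (m + 2)
        = qfact RatFunc.X (2 * m + 4) / (qfact RatFunc.X (m + 2) * qfact RatFunc.X (m + 2)) := by
      rw [qbinom, if_pos (by omega), show 2 * (m + 2) - (m + 2) = m + 2 from by omega,
        show 2 * (m + 2) = 2 * m + 4 from by omega]
    have h2 : qbinomZ RatFunc.X (2 * (m + 2)) (((m + 2 : ℕ) : ℤ) - 2)
        = qfact RatFunc.X (2 * m + 4) / (qfact RatFunc.X m * qfact RatFunc.X (m + 4)) := by
      rw [qbinomZ, if_pos (by constructor <;> omega),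
        show ((((m + 2 : ℕ) : ℤ) - 2).toNat) = m from by omega,
        show 2 * (m + 2) - m = m + 4 from by omega,
        show 2 * (m + 2) = 2 * m + 4 from by omega]
    have h3 : qbinom RatFunc.X (2 * (m + 2) + 1) (m + 2)
        = qfact RatFunc.X (2 * m + 5) / (qfact RatFunc.X (m + 2) * qfact RatFunc.X (m + 3)) := by
      rw [qbinom, if_pos (by omega), show 2 * (m + 2) + 1 - (m + 2) = m + 3 from by omega,
        show 2 * (m + 2) + 1 = 2 * m + 5 from by omega]
    rw [h1, h2, h3]
    have f4 : qfact RatFunc.X (m + 4) = qfact RatFunc.X m * (qint RatFunc.X (m + 1) *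
        qint RatFunc.X (m + 2) * qint RatFunc.X (m + 3) * qint RatFunc.X (m + 4)) := by
      rw [qfact_succ, qfact_succ, qfact_succ, qfact_succ]; ring
    have f3 : qfact RatFunc.X (m + 3) = qfact RatFunc.X m * (qint RatFunc.X (m + 1) *
        qint RatFunc.X (m + 2) * qint RatFunc.X (m + 3)) := by
      rw [qfact_succ, qfact_succ, qfact_succ]; ring
    have f2 : qfact RatFunc.X (m + 2) = qfact RatFunc.X m * (qint RatFunc.X (m + 1) *
        qint RatFunc.X (m + 2)) := by
      rw [qfact_succ, qfact_succ]; ring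
    have f5 : qfact RatFunc.X (2 * m + 5) = qfact RatFunc.X (2 * m + 4) * qint RatFunc.X (2 * m + 5) := by
      rw [show 2 * m + 5 = (2 * m + 4) + 1 from rfl, qfact_succ]
    rw [f4, f3, f2, f5]
    have hF := qfact_ne_zero m
    have hA := qfact_ne_zero (2 * m + 4)
    have g1 := qint_ne_zero (m + 1) (by omega)
    have g2 := qint_ne_zero (m + 2) (by omega)
    have g3 := qint_ne_zero (m + 3) (by omega)
    have g4 := qint_ne_zero (m + 4) (by omega)
    have g5 := qint_ne_zero (2 * m + 5) (by omega)
    have g0 := qint_ne_zero 2 (by omega)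
    have hk := key m
    rw [show m + 2 + 2 = m + 4 from by omega]
    have hab : qfact RatFunc.X m * (qint RatFunc.X (m + 1) * qint RatFunc.X (m + 2)) ≠ 0 :=
      mul_ne_zero hF (mul_ne_zero g1 g2)
    have habc : qfact RatFunc.X m * (qint RatFunc.X (m + 1) * qint RatFunc.X (m + 2) *
        qint RatFunc.X (m + 3)) ≠ 0 :=
      mul_ne_zero hF (mul_ne_zero (mul_ne_zero g1 g2) g3)
    have habcd : qfact RatFunc.X m * (qint RatFunc.X (m + 1) * qint RatFunc.X (m + 2) *
        qint RatFunc.X (m + 3) * qint RatFunc.X (m + 4)) ≠ 0 :=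
      mul_ne_zero hF (mul_ne_zero (mul_ne_zero (mul_ne_zero g1 g2) g3) g4)
    rw [← mul_div_assoc, div_mul_div_comm,
      div_sub_div _ _ (mul_ne_zero hab hab) (mul_ne_zero hF habcd),
      div_eq_div_iff (mul_ne_zero (mul_ne_zero hab hab) (mul_ne_zero hF habcd))
        (mul_ne_zero g4 (mul_ne_zero hab habc))]
    linear_combination (qfact RatFunc.X (2 * m + 4) * qfact RatFunc.X m ^ 4 *
      qint RatFunc.X (m + 1) ^ 3 * qint RatFunc.X (m + 2) ^ 3 *
      qint RatFunc.X (m + 3) * qint RatFunc.X (m + 4)) * hk
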